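/- arXiv:2010.11928 — 7 statements merged into one kernel-verified Lean document; each statement's English description precedes it below -/
import Mathlib

section
/- Let n ∈ ℕ and k, k̂ ∈ [n] with k ≤ k̂ and n ≥ k + k̂. Let μ : {0,1,…,n} → ℝ_{≥0} be a measure that is non-increasing on [k, k̂]. If 𝔉 ⊆ [n]^{(≤k̂)} is an intersecting family, then μ(𝔉) ≤ μ(B_{n,1}), where B_{n,1} = {F ⊆ [n] : 1 ∈ F}. -/
/-!
Count `𝔉` level by level: `f s` sets of size `s`, against `g s = (n - 1).choose (s - 1)`, the
number of sets of size `s` in the star `B_{n,1}`. Erdős–Ko–Rado gives `f s ≤ g s` whenever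
`2 s ≤ n`, in particular for every `s < k`. For `2 s > n` the levels `s` and `n - s` together hold
at most `n.choose s ≤ g s + g (n - s)` sets, since no member of `𝔉` is the complement of another.
As `k + k̂ ≤ n`, every window `[k, m] ⊆ [k, k̂]` contains the partner `n - s` of each of its
upper-half levels `s`, so `∑_{s ∈ [k, m]} f s ≤ ∑_{s ∈ [k, m]} g s`. Abel summation against the
weights `μ`, non-increasing and nonnegative on `[k, k̂]`, turns these partial-sum inequalities
into `∑_s f s μ s ≤ ∑_s g s μ s`.
-/

open Finset

/-- The shift operation `σ_{ij}` on a set `F ⊆ ℕ`. -/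
def shift (i j : ℕ) (F : Finset ℕ) : Finset ℕ :=
  if j ∈ F ∧ i ∉ F then insert i (F.erase j) else F

/-- The shift operation on a family. -/
def shiftFam (i j : ℕ) (𝔉 : Finset (Finset ℕ)) : Finset (Finset ℕ) :=
  𝔉.image (shift i j) ∪ 𝔉.filter (fun F => shift i j F ∈ 𝔉)

/-- A family of subsets of `[n] = {1,…,n}` is shifted. -/
def IsShifted (n : ℕ) (𝔉 : Finset (Finset ℕ)) : Prop :=
  ∀ i j : ℕ, 1 ≤ i → i < j → j ≤ n → ∀ F ∈ 𝔉, shift i j F ∈ 𝔉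

/-- The intersection `⋂_{i ∈ s} G i` (for `s` nonempty). -/
def interOn {r : ℕ} (s : Finset (Fin r)) (G : Fin r → Finset ℕ) : Finset ℕ :=
  (s.sup G).filter fun x => ∀ i ∈ s, x ∈ G i

/-- The intersection `⋂_{i} G i`. -/
def interAll {r : ℕ} (G : Fin r → Finset ℕ) : Finset ℕ :=
  interOn Finset.univ G

/-- Families `𝔉 0, …, 𝔉 (r-1)` are `r`-cross `t`-intersecting. -/
def CrossIntersecting {r : ℕ} (t : ℕ) (𝔉 : Fin r → Finset (Finset ℕ)) : Prop :=
  ∀ G : Fin r → Finset ℕ, (∀ i, G i ∈ 𝔉 i) → t ≤ (interAll G).card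

/-- `a` is a necessary intersection point of the cross `t`-intersecting families `𝔉`. -/
def IsNIP {r : ℕ} (t : ℕ) (𝔉 : Fin r → Finset (Finset ℕ)) (a : ℕ) : Prop :=
  ∃ G : Fin r → Finset ℕ, (∀ i, G i ∈ 𝔉 i) ∧
    (Finset.Icc 1 a ∩ interAll G).card = t ∧ a ∈ interAll G

/-- An intersecting family. -/
def Intersecting' (𝔉 : Finset (Finset ℕ)) : Prop :=
  ∀ F ∈ 𝔉, ∀ F' ∈ 𝔉, (F ∩ F').Nonempty

/-- `a` is a necessary intersection point of the intersecting family `𝔉`. -/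
def IsNIP1 (𝔉 : Finset (Finset ℕ)) (a : ℕ) : Prop :=
  ∃ F ∈ 𝔉, ∃ F' ∈ 𝔉, (Finset.Icc 1 a ∩ F ∩ F').card = 1 ∧ a ∈ F ∩ F'

/-- `A_{n,a,t} = {F ⊆ [n] : |F ∩ [a]| ≥ t}`. -/
def famA (n a t : ℕ) : Finset (Finset ℕ) :=
  (Finset.Icc 1 n).powerset.filter (fun F => t ≤ (F ∩ Finset.Icc 1 a).card)

/-- `B_{n,a} = {F ⊆ [n] : [a] ⊆ F}`. -/
def famB (n a : ℕ) : Finset (Finset ℕ) :=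
  (Finset.Icc 1 n).powerset.filter (fun F => Finset.Icc 1 a ⊆ F)

/-- `F ∈ 𝔉 j` depends on `a`, i.e. `F ∈ 𝔉_j(a)`. -/
def DependsOnPt {r : ℕ} (t : ℕ) (𝔉 : Fin r → Finset (Finset ℕ)) (a : ℕ) (j : Fin r)
    (F : Finset ℕ) : Prop :=
  F ∈ 𝔉 j ∧ ∃ G : Fin r → Finset ℕ, (∀ i, i ≠ j → G i ∈ 𝔉 i) ∧
    (Finset.Icc 1 a ∩ F ∩ interOn (Finset.univ.erase j) G).card = t ∧
    a ∈ F ∩ interOn (Finset.univ.erase j) G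

lemma erase_univ_nonempty {r : ℕ} (hr : 2 ≤ r) (i : Fin r) :
    (Finset.univ.erase i).Nonempty := by
  rw [← Finset.card_pos, Finset.card_erase_of_mem (Finset.mem_univ i),
    Finset.card_univ, Fintype.card_fin]
  omega

open scoped FinsetFamily

theorem Nat.choose_le_choose_sub_one_add_choose_sub_one (n s : ℕ) :
    n.choose s ≤ (n - 1).choose (s - 1) + (n - 1).choose (n - s - 1) := by
  rcases n with _ | n
  · rcases s with _ | s <;> simp
  rcases s with _ | s
  · simp
  rw [Nat.choose_succ_succ', Nat.add_sub_cancel, Nat.add_sub_cancel]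
  gcongr
  rcases le_or_gt (s + 1) n with hsn | hsn
  · rw [← Nat.choose_symm hsn]
    exact le_of_eq (by congr 1; omega)
  · simp [Nat.choose_eq_zero_of_lt hsn]

theorem sum_Icc_le_sum_Icc_of_le_of_add_le {M : Type*} [AddCommMonoid M] [PartialOrder M]
    [IsOrderedAddMonoid M] {f g : ℕ → M} {n k m : ℕ} (hkm : k + m ≤ n)
    (hle : ∀ s ∈ Icc k m, 2 * s ≤ n → f s ≤ g s)
    (hpair : ∀ s ∈ Icc k m, n < 2 * s → f s + f (n - s) ≤ g s + g (n - s)) :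
    ∑ s ∈ Icc k m, f s ≤ ∑ s ∈ Icc k m, g s := by
  -- As `k + m ≤ n`, the reflection `s ↦ n - s` maps the upper half of the window into its
  -- lower half.
  set B := {s ∈ Icc k m | n < 2 * s}
  set A := {s ∈ Icc k m | ¬ n < 2 * s}
  have hinj : Set.InjOn (n - ·) B := by
    intro x hx y hy hxy
    rw [mem_coe, mem_filter, mem_Icc] at hx hy
    simp only at hxy
    omega
  have hBA : B.image (n - ·) ⊆ A := by
    intro t ht
    simp only [B, A, mem_image, mem_filter, mem_Icc] at ht ⊢
    omega
  have hsplit (h : ℕ → M) : ∑ s ∈ Icc k m, h s =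
      ∑ s ∈ A \ B.image (n - ·), h s + ∑ s ∈ B, (h s + h (n - s)) := by
    rw [← sum_filter_not_add_sum_filter _ (n < 2 * ·), ← sum_sdiff hBA, sum_image hinj,
      sum_add_distrib, add_assoc, add_comm (∑ s ∈ B, h (n - s))]
  rw [hsplit f, hsplit g]
  refine add_le_add (sum_le_sum fun s hs ↦ ?_) (sum_le_sum fun s hs ↦ ?_)
  · rw [mem_sdiff, mem_filter] at hs
    exact hle s hs.1.1 (not_lt.1 hs.1.2)
  · rw [mem_filter] at hs
    exact hpair s hs.1 hs.2

section
variable {R : Type*} [CommRing R] [PartialOrder R] [IsOrderedRing R]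

theorem sum_Icc_mul_le_sum_Icc_mul_of_antitoneOn {d μ : ℕ → R} {k K : ℕ} (hkK : k ≤ K)
    (hd : ∀ m ∈ Icc k K, 0 ≤ ∑ s ∈ Icc k m, d s) (hμ : AntitoneOn μ (Set.Icc k K)) :
    (∑ s ∈ Icc k K, d s) * μ K ≤ ∑ s ∈ Icc k K, d s * μ s := by
  induction K, hkK using Nat.le_induction with
  | base => simp
  | succ K hkK ih =>
    have hsum : 0 ≤ ∑ s ∈ Icc k K, d s := hd K (mem_Icc.2 ⟨hkK, K.le_succ⟩)
    have hμK : μ (K + 1) ≤ μ K := hμ ⟨hkK, K.le_succ⟩ ⟨by omega, le_rfl⟩ K.le_succ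
    have ih' := ih (fun m hm ↦ hd m (Icc_subset_Icc_right K.le_succ hm))
      (hμ.mono (Set.Icc_subset_Icc_right K.le_succ))
    rw [sum_Icc_succ_top (by omega), sum_Icc_succ_top (by omega), add_mul]
    exact add_le_add_left ((mul_le_mul_of_nonneg_left hμK hsum).trans ih') _

theorem sum_Icc_mul_le_sum_Icc_mul_of_sum_le {f g μ : ℕ → R} {k K : ℕ}
    (hfg : ∀ m ∈ Icc k K, ∑ s ∈ Icc k m, f s ≤ ∑ s ∈ Icc k m, g s)
    (hμ : AntitoneOn μ (Set.Icc k K)) (hμK : 0 ≤ μ K) :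
    ∑ s ∈ Icc k K, f s * μ s ≤ ∑ s ∈ Icc k K, g s * μ s := by
  rcases lt_or_ge K k with hKk | hkK
  · simp [Icc_eq_empty_of_lt hKk]
  have hd : ∀ m ∈ Icc k K, 0 ≤ ∑ s ∈ Icc k m, (g s - f s) := fun m hm ↦ by
    rw [sum_sub_distrib, sub_nonneg]
    exact hfg m hm
  rw [← sub_nonneg, ← sum_sub_distrib]
  simp_rw [← sub_mul]
  exact (mul_nonneg (hd K (right_mem_Icc.2 hkK)) hμK).trans
    (sum_Icc_mul_le_sum_Icc_mul_of_antitoneOn hkK hd hμ)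

end

theorem sum_apply_card_eq_sum_card_slice_mul {α R : Type*} [NonAssocSemiring R]
    {𝒜 : Finset (Finset α)} {S : Finset ℕ} (h𝒜S : ∀ A ∈ 𝒜, #A ∈ S) (μ : ℕ → R) :
    ∑ A ∈ 𝒜, μ #A = ∑ s ∈ S, #(𝒜 # s) * μ s := by
  rw [← sum_fiberwise_of_maps_to h𝒜S]
  refine sum_congr rfl fun s _ ↦ ?_
  rw [slice, sum_congr rfl fun A hA ↦ congrArg μ (mem_filter.1 hA).2, sum_const, nsmul_eq_mul]

section
variable {α : Type*} [DecidableEq α]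

theorem erdos_ko_rado_of_forall_subset {X : Finset α} {𝒜 : Finset (Finset α)} {r : ℕ}
    (h𝒜X : ∀ A ∈ 𝒜, A ⊆ X) (h𝒜 : (𝒜 : Set (Finset α)).Intersecting)
    (hr : (𝒜 : Set (Finset α)).Sized r) (hrX : 2 * r ≤ #X) :
    #𝒜 ≤ (#X - 1).choose (r - 1) := by
  let e : Fin #X ↪ α := X.equivFin.symm.toEmbedding.trans (.subtype (· ∈ X))
  have hX : univ.map e = X := by
    ext x
    simpa [e] using
      ⟨fun ⟨i, hi⟩ ↦ hi ▸ (X.equivFin.symm i).2, fun hx ↦ ⟨X.equivFin ⟨x, hx⟩, by simp⟩⟩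
  let ℬ := 𝒜.preimage (map e) (map_injective e).injOn
  have hℬ : #ℬ = #𝒜 := by
    rw [card_preimage, filter_true_of_mem]
    intro A hA
    obtain ⟨B, -, rfl⟩ := subset_map_iff.1 (hX ▸ h𝒜X A hA)
    exact ⟨B, rfl⟩
  rw [← hℬ]
  refine erdos_ko_rado (n := #X) ?_ ?_ (by omega)
  · intro A hA B hB hAB
    exact h𝒜 (mem_preimage.1 hA) (mem_preimage.1 hB) ((disjoint_map e).2 hAB)
  · intro A hA
    simpa using hr (mem_preimage.1 hA)

theorem card_slice_le_choose {X : Finset α} {𝒜 : Finset (Finset α)} {r : ℕ}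
    (h𝒜X : ∀ A ∈ 𝒜, A ⊆ X) (h𝒜 : (𝒜 : Set (Finset α)).Intersecting) (hrX : 2 * r ≤ #X) :
    #(𝒜 # r) ≤ (#X - 1).choose (r - 1) :=
  erdos_ko_rado_of_forall_subset (fun A hA ↦ h𝒜X A (slice_subset hA))
    (h𝒜.mono (by simpa using slice_subset)) sized_slice hrX

theorem card_slice_add_card_slice_le_choose {X : Finset α} {𝒜 : Finset (Finset α)} {a b : ℕ}
    (h𝒜X : ∀ A ∈ 𝒜, A ⊆ X) (h𝒜 : (𝒜 : Set (Finset α)).Intersecting) (hab : a + b = #X) :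
    #(𝒜 # a) + #(𝒜 # b) ≤ (#X).choose a := by
  -- Complements of the `b`-sets are `a`-sets, and none of them lies in `𝒜`.
  have hcompl : #((𝒜 # b).image (X \ ·)) = #(𝒜 # b) := by
    refine card_image_of_injOn fun A hA B hB hAB ↦ ?_
    rw [← Finset.sdiff_sdiff_eq_self (h𝒜X A (slice_subset hA)),
      ← Finset.sdiff_sdiff_eq_self (h𝒜X B (slice_subset hB))]
    exact congrArg (X \ ·) hAB
  have hdisj : Disjoint (𝒜 # a) ((𝒜 # b).image (X \ ·)) := by
    refine disjoint_left.2 fun A hA hA' ↦ ?_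
    obtain ⟨B, hB, rfl⟩ := mem_image.1 hA'
    exact h𝒜 (slice_subset hA) (slice_subset hB) disjoint_sdiff_self_left
  have hsub : 𝒜 # a ∪ (𝒜 # b).image (X \ ·) ⊆ X.powersetCard a := by
    intro A hA
    rcases mem_union.1 hA with hA | hA
    · exact mem_powersetCard.2 ⟨h𝒜X A (slice_subset hA), (mem_slice.1 hA).2⟩
    · obtain ⟨B, hB, rfl⟩ := mem_image.1 hA
      rw [mem_slice] at hB
      refine mem_powersetCard.2 ⟨sdiff_subset, ?_⟩
      rw [card_sdiff_of_subset (h𝒜X B hB.1)]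
      omega
  calc #(𝒜 # a) + #(𝒜 # b) = #(𝒜 # a ∪ (𝒜 # b).image (X \ ·)) := by
        rw [card_union_of_disjoint hdisj, hcompl]
    _ ≤ #(X.powersetCard a) := card_le_card hsub
    _ = (#X).choose a := card_powersetCard a X

theorem sum_card_slice_Icc_le_sum_choose {X : Finset α} {𝒜 : Finset (Finset α)} {k m : ℕ}
    (h𝒜X : ∀ A ∈ 𝒜, A ⊆ X) (h𝒜 : (𝒜 : Set (Finset α)).Intersecting) (hkm : k + m ≤ #X) :
    ∑ s ∈ Icc k m, #(𝒜 # s) ≤ ∑ s ∈ Icc k m, (#X - 1).choose (s - 1) := by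
  refine sum_Icc_le_sum_Icc_of_le_of_add_le hkm (fun s _ hs ↦ card_slice_le_choose h𝒜X h𝒜 hs)
    fun s hs hns ↦ ?_
  have hsX : s ≤ #X := by rw [mem_Icc] at hs; omega
  calc #(𝒜 # s) + #(𝒜 # (#X - s)) ≤ (#X).choose s :=
        card_slice_add_card_slice_le_choose h𝒜X h𝒜 (by omega)
    _ ≤ _ := Nat.choose_le_choose_sub_one_add_choose_sub_one _ _

theorem sum_card_slice_mul_le_sum_choose_mul {X : Finset α} {𝒜 : Finset (Finset α)} {k K : ℕ}
    (h𝒜X : ∀ A ∈ 𝒜, A ⊆ X) (h𝒜 : (𝒜 : Set (Finset α)).Intersecting) (hk : 1 ≤ k)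
    (hkK : k + K ≤ #X) {μ : ℕ → ℝ} (hμ₀ : ∀ s ≤ K, 0 ≤ μ s) (hμ : AntitoneOn μ (Set.Icc k K)) :
    ∑ s ∈ Icc 1 K, #(𝒜 # s) * μ s ≤ ∑ s ∈ Icc 1 K, ((#X - 1).choose (s - 1) : ℝ) * μ s := by
  have hIcc : {s ∈ Icc 1 K | ¬ s < k} = Icc k K := by
    ext s
    simp only [mem_filter, mem_Icc]
    omega
  rw [← sum_filter_add_sum_filter_not _ (· < k),
    ← sum_filter_add_sum_filter_not (Icc 1 K) (· < k), hIcc]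
  refine add_le_add (sum_le_sum fun s hs ↦ ?_)
    (sum_Icc_mul_le_sum_Icc_mul_of_sum_le (fun m hm ↦ ?_) hμ (hμ₀ K le_rfl))
  · rw [mem_filter, mem_Icc] at hs
    exact mul_le_mul_of_nonneg_right
      (by exact_mod_cast card_slice_le_choose h𝒜X h𝒜 (by omega)) (hμ₀ s hs.1.2)
  · rw [mem_Icc] at hm
    exact_mod_cast sum_card_slice_Icc_le_sum_choose h𝒜X h𝒜 (by omega)

end

theorem choose_le_card_slice_famB_one {n s : ℕ} (hn : 1 ≤ n) (hs : 1 ≤ s) :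
    (n - 1).choose (s - 1) ≤ #((famB n 1) # s) := by
  have h1 : ∀ E ∈ (Icc 2 n).powersetCard (s - 1), 1 ∉ E := fun E hE h1 ↦ by
    have := (mem_powersetCard.1 hE).1 h1
    simp at this
  calc (n - 1).choose (s - 1) = #((Icc 2 n).powersetCard (s - 1)) := by simp
    _ ≤ #((famB n 1) # s) :=
      card_le_card_of_injOn (insert 1) (fun E hE ↦ ?_) fun E hE E' hE' h ↦ ?_
  · have hE' := mem_powersetCard.1 hE
    simp only [mem_coe, mem_slice, famB, mem_filter, mem_powerset, Icc_self, singleton_subset_iff,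
      mem_insert_self, and_true, card_insert_of_notMem (h1 E hE), hE'.2]
    exact ⟨insert_subset (mem_Icc.2 ⟨le_rfl, hn⟩)
      (hE'.1.trans (Icc_subset_Icc_left (by omega))), by omega⟩
  · simpa [erase_insert (h1 E hE), erase_insert (h1 E' hE')] using congrArg (·.erase 1) h

theorem intersecting_measure_bound_general
    (n k khat : ℕ) (hk1 : 1 ≤ k)
    (hn : k + khat ≤ n)
    (μ : ℕ → ℝ) (hμ0 : ∀ x ≤ n, 0 ≤ μ x)
    (hmono : ∀ x y, k ≤ x → x ≤ y → y ≤ khat → μ y ≤ μ x)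
    (𝔉 : Finset (Finset ℕ))
    (hsub : 𝔉 ⊆ (Finset.Icc 1 n).powerset.filter (fun F => F.card ≤ khat))
    (hint : Intersecting' 𝔉) :
    ∑ F ∈ 𝔉, μ F.card ≤ ∑ F ∈ famB n 1, μ F.card := by
  have h𝔉 : (𝔉 : Set (Finset ℕ)).Intersecting := fun F hF F' hF' ↦
    not_disjoint_iff_nonempty_inter.2 (hint F hF F' hF')
  have h𝔉X : ∀ F ∈ 𝔉, F ⊆ Icc 1 n := fun F hF ↦ mem_powerset.1 (mem_filter.1 (hsub hF)).1
  have h𝔉card : ∀ F ∈ 𝔉, #F ∈ Icc 1 khat := fun F hF ↦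
    mem_Icc.2 ⟨card_pos.2 (by simpa using hint F hF F hF), (mem_filter.1 (hsub hF)).2⟩
  have hBcard : ∀ F ∈ famB n 1, #F ∈ Icc 1 n := fun F hF ↦ by
    obtain ⟨hFX, h1F⟩ := mem_filter.1 hF
    exact mem_Icc.2
      ⟨card_pos.2 ⟨1, h1F (by simp)⟩, by simpa using card_le_card (mem_powerset.1 hFX)⟩
  have hX : #(Icc 1 n) = n := by simp
  calc ∑ F ∈ 𝔉, μ #F = ∑ s ∈ Icc 1 khat, #(𝔉 # s) * μ s :=
        sum_apply_card_eq_sum_card_slice_mul h𝔉card μ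
    _ ≤ ∑ s ∈ Icc 1 khat, ((n - 1).choose (s - 1) : ℝ) * μ s := by
        simpa only [hX] using sum_card_slice_mul_le_sum_choose_mul h𝔉X h𝔉 hk1 (by rwa [hX])
          (fun s hs ↦ hμ0 s (by omega)) fun x hx y hy hxy ↦ hmono x y hx.1 hxy hy.2
    _ ≤ ∑ s ∈ Icc 1 khat, #((famB n 1) # s) * μ s := by
        refine sum_le_sum fun s hs ↦
          mul_le_mul_of_nonneg_right ?_ (hμ0 s ((mem_Icc.1 hs).2.trans (by omega)))
        exact_mod_cast choose_le_card_slice_famB_one (by omega) (mem_Icc.1 hs).1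
    _ ≤ ∑ s ∈ Icc 1 n, #((famB n 1) # s) * μ s :=
        sum_le_sum_of_subset_of_nonneg (Icc_subset_Icc_right (by omega)) fun s hs _ ↦
          mul_nonneg (Nat.cast_nonneg _) (hμ0 s (mem_Icc.1 hs).2)
    _ = ∑ F ∈ famB n 1, μ #F := (sum_apply_card_eq_sum_card_slice_mul hBcard μ).symm

/-- **Theorem 1.5**: the maximal measure of an intersecting family. -/
theorem intersecting_measure_bound
    (n k khat : ℕ) (hk1 : 1 ≤ k) (hkk : k ≤ khat) (hkn : khat ≤ n)
    (hn : k + khat ≤ n)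
    (μ : ℕ → ℝ) (hμ0 : ∀ x ≤ n, 0 ≤ μ x)
    (hmono : ∀ x y, k ≤ x → x ≤ y → y ≤ khat → μ y ≤ μ x)
    (𝔉 : Finset (Finset ℕ))
    (hsub : 𝔉 ⊆ (Finset.Icc 1 n).powerset.filter (fun F => F.card ≤ khat))
    (hint : Intersecting' 𝔉) :
    ∑ F ∈ 𝔉, μ F.card ≤ ∑ F ∈ famB n 1, μ F.card :=
  intersecting_measure_bound_general n k khat hk1 hn μ hμ0 hmono 𝔉 hsub hint
end

section
/- Let n ≥ 1 be an integer and p ∈ [0, 1/2]. If 𝔉 ⊆ 𝒫([n]) is an intersecting family, then ρ_p(𝔉) ≤ p. -/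
/-! Katona's circle method. For `p = k / N` with `2k ≤ N`, colour each point of the ground set
by a uniformly random `f i ∈ ℤ/N` and a uniformly random arc `[t, t + k)` of the cycle; the
points coloured inside the arc form a `ρ_p`-random set. For fixed `f`, the arcs whose sets lie in
an intersecting family pairwise meet, and at most `k` arcs of length `k ≤ N/2` pairwise meet, so
the family has measure at most `k / N`. Since `ρ_p` is polynomial in `p`, the bound passes to all
`p ≤ 1/2` by density. -/

open Finset

/-- `F ∈ 𝔉 j` depends on `a`, i.e. `F ∈ 𝔉_j(a)`. -/
def DependsOn' {r : ℕ} (t : ℕ) (𝔉 : Fin r → Finset (Finset ℕ)) (a : ℕ) (j : Fin r)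
    (F : Finset ℕ) : Prop :=
  F ∈ 𝔉 j ∧ ∃ G : Fin r → Finset ℕ, (∀ i, i ≠ j → G i ∈ 𝔉 i) ∧
    (Finset.Icc 1 a ∩ F ∩ interOn (Finset.univ.erase j) G).card = t ∧
    a ∈ F ∩ interOn (Finset.univ.erase j) G

namespace Katona

variable {N k : ℕ}

def arc (k : ℕ) (t : ZMod N) : Finset (ZMod N) := (range k).image fun i : ℕ => t + i

lemma mem_arc {t x : ZMod N} : x ∈ arc k t ↔ ∃ i < k, t + i = x := by
  simp [arc]

lemma natCast_inj_of_lt {i j : ℕ} (hi : i < N) (hj : j < N) :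
    (i : ZMod N) = j ↔ i = j := by
  rw [ZMod.natCast_eq_natCast_iff', Nat.mod_eq_of_lt hi, Nat.mod_eq_of_lt hj]

lemma card_arc (hk : k ≤ N) (t : ZMod N) : #(arc k t) = k := by
  rw [arc, card_image_of_injOn, card_range]
  intro i hi j hj hij
  simp only [coe_range, Set.mem_Iio] at hi hj
  exact (natCast_inj_of_lt (hi.trans_le hk) (hj.trans_le hk)).1 (add_left_cancel hij)

lemma disjoint_arc_arc_add (hk : 2 * k ≤ N) (t : ZMod N) :
    Disjoint (arc k t) (arc k (t + k)) := by
  rw [disjoint_left]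
  rintro _ hx hx'
  obtain ⟨i, hi, rfl⟩ := mem_arc.1 hx
  obtain ⟨j, hj, hji⟩ := mem_arc.1 hx'
  have : ((k + j : ℕ) : ZMod N) = i := by push_cast; linear_combination hji
  have := (natCast_inj_of_lt (by omega) (by omega)).1 this
  omega

lemma exists_of_not_disjoint_arc {t₀ t : ZMod N} (h : ¬Disjoint (arc k t₀) (arc k t)) :
    ∃ r < k, t = t₀ + r ∨ t + k = t₀ + r := by
  obtain ⟨x, hx₀, hx⟩ := not_disjoint_iff.1 h
  obtain ⟨i, hi, rfl⟩ := mem_arc.1 hx₀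
  obtain ⟨j, hj, hji⟩ := mem_arc.1 hx
  rcases le_or_gt j i with hji' | hij
  · refine ⟨i - j, by omega, Or.inl ?_⟩
    rw [Nat.cast_sub hji']
    linear_combination hji
  · refine ⟨k - (j - i), by omega, Or.inr ?_⟩
    rw [Nat.cast_sub (by omega), Nat.cast_sub hij.le]
    linear_combination hji

theorem card_le_of_forall_not_disjoint_arc (hk : 2 * k ≤ N) {T : Finset (ZMod N)}
    (hT : ∀ t ∈ T, ∀ s ∈ T, ¬Disjoint (arc k t) (arc k s)) : #T ≤ k := by
  obtain rfl | ⟨t₀, ht₀⟩ := T.eq_empty_or_nonempty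
  · simp
  -- Of the two arcs starting at `t₀ + r` and ending just before it, at most one is in `T`.
  let g : ℕ → ZMod N := fun r => if t₀ + r ∈ T then t₀ + r else t₀ + r - k
  have hTg : T ⊆ (range k).image g := by
    intro t ht
    obtain ⟨r, hr, rfl | hend⟩ := exists_of_not_disjoint_arc (hT t₀ ht₀ t ht)
    · exact mem_image.2 ⟨r, mem_range.2 hr, if_pos ht⟩
    · have hr' : t₀ + r ∉ T := fun h => hT t ht _ h (hend ▸ disjoint_arc_arc_add hk t)
      refine mem_image.2 ⟨r, mem_range.2 hr, ?_⟩
      simp only [g, if_neg hr', ← hend, add_sub_cancel_right]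
  calc #T ≤ #((range k).image g) := card_le_card hTg
    _ ≤ k := card_image_le.trans (card_range k).le

end Katona

open Katona

lemma card_filter_preimage_eq {ι β : Type*} [Fintype ι] [DecidableEq ι] [Fintype β]
    [DecidableEq β] (A : Finset β) (S : Finset ι) :
    #{f : ι → β | ({i | f i ∈ A} : Finset ι) = S} =
      #A ^ #S * #Aᶜ ^ (Fintype.card ι - #S) := by
  have hfib : ({f : ι → β | ({i | f i ∈ A} : Finset ι) = S} : Finset (ι → β)) =
      Fintype.piFinset fun i => if i ∈ S then A else Aᶜ := by
    ext f
    simp only [Finset.ext_iff, mem_filter, mem_univ, true_and, Fintype.mem_piFinset]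
    refine forall_congr' fun i => ?_
    split_ifs with hi <;> simp [hi]
  simp only [hfib, Fintype.card_piFinset, apply_ite card, prod_ite, prod_const, filter_mem_eq_inter,
    univ_inter, filter_not, card_sdiff, card_univ, inter_univ]

/-- `ρ_p(𝒜)` for a family `𝒜` of subsets of an `n`-element ground set. -/
def prodMeasure {α : Type*} (n : ℕ) (p : ℝ) (𝒜 : Finset (Finset α)) : ℝ :=
  ∑ A ∈ 𝒜, p ^ #A * (1 - p) ^ (n - #A)

lemma continuous_prodMeasure {α : Type*} (n : ℕ) (𝒜 : Finset (Finset α)) :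
    Continuous fun p => prodMeasure n p 𝒜 := by
  unfold prodMeasure
  fun_prop

section Intersecting

variable {ι : Type*} [Fintype ι] [DecidableEq ι] {𝒜 : Finset (Finset ι)}

theorem card_mul_sum_le_of_intersecting {N k : ℕ} [NeZero N] (hk : 2 * k ≤ N)
    (h𝒜 : (𝒜 : Set (Finset ι)).Intersecting) :
    N * ∑ S ∈ 𝒜, k ^ #S * (N - k) ^ (Fintype.card ι - #S) ≤ k * N ^ Fintype.card ι := by
  -- Double count the pairs `(t, f)` for which the points sent into `arc k t` by `f` form a
  -- member of `𝒜`.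
  let r : ZMod N → (ι → ZMod N) → Prop := fun t f => ({i | f i ∈ arc k t} : Finset ι) ∈ 𝒜
  have hcount : ∀ t : ZMod N, #(univ.bipartiteAbove r t) =
      ∑ S ∈ 𝒜, k ^ #S * (N - k) ^ (Fintype.card ι - #S) := by
    intro t
    rw [bipartiteAbove, ← sum_card_fiberwise_eq_card_filter]
    refine sum_congr rfl fun S _ => ?_
    rw [card_filter_preimage_eq, card_compl, card_arc (by omega), ZMod.card]
  have hKatona : ∀ f : ι → ZMod N, #(univ.bipartiteBelow r f) ≤ k := by
    intro f
    refine card_le_of_forall_not_disjoint_arc hk fun t ht s hs => ?_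
    obtain ⟨i, hit, his⟩ := not_disjoint_iff.1 (h𝒜 (mem_filter.1 ht).2 (mem_filter.1 hs).2)
    exact not_disjoint_iff.2 ⟨f i, (mem_filter.1 hit).2, (mem_filter.1 his).2⟩
  have := card_mul_le_card_mul r (fun t _ => (hcount t).ge) (fun f _ => hKatona f)
  simpa [ZMod.card, mul_comm] using this

lemma prodMeasure_div_le_of_intersecting {N k : ℕ} (hN : 0 < N) (hk : 2 * k ≤ N)
    (h𝒜 : (𝒜 : Set (Finset ι)).Intersecting) :
    prodMeasure (Fintype.card ι) ((k : ℝ) / N) 𝒜 ≤ k / N := by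
  have : NeZero N := ⟨hN.ne'⟩
  have hN' : (0 : ℝ) < N := by exact_mod_cast hN
  have hterm : ∀ S ∈ 𝒜, ((k : ℝ) / N) ^ #S * (1 - (k : ℝ) / N) ^ (Fintype.card ι - #S) =
      ((k ^ #S * (N - k) ^ (Fintype.card ι - #S) : ℕ) : ℝ) / N ^ Fintype.card ι := by
    intro S _
    rw [Nat.cast_mul, Nat.cast_pow, Nat.cast_pow, Nat.cast_sub (by omega), one_sub_div hN'.ne',
      div_pow, div_pow, div_mul_div_comm, ← pow_add, Nat.add_sub_cancel' S.card_le_univ]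
  rw [prodMeasure, sum_congr rfl hterm, ← sum_div, ← Nat.cast_sum,
    div_le_div_iff₀ (by positivity) hN', mul_comm]
  exact_mod_cast card_mul_sum_le_of_intersecting hk h𝒜

open Filter Topology in
theorem prodMeasure_le_of_intersecting {p : ℝ} (hp0 : 0 ≤ p) (hp : p ≤ 1 / 2)
    (h𝒜 : (𝒜 : Set (Finset ι)).Intersecting) : prodMeasure (Fintype.card ι) p 𝒜 ≤ p := by
  have hlim : Tendsto (fun N : ℕ => (⌊p * N⌋₊ : ℝ) / N) atTop (𝓝 p) :=
    (tendsto_nat_floor_mul_div_atTop hp0).comp tendsto_natCast_atTop_atTop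
  refine le_of_tendsto_of_tendsto (((continuous_prodMeasure _ 𝒜).tendsto p).comp hlim) hlim ?_
  filter_upwards [eventually_gt_atTop 0] with N hN
  refine prodMeasure_div_le_of_intersecting hN ?_ h𝒜
  have : (2 * ⌊p * N⌋₊ : ℝ) ≤ N := by
    have := Nat.floor_le (a := p * N) (by positivity)
    nlinarith
  exact_mod_cast this

end Intersecting

section Subtype

variable {s : Finset ℕ} {𝔉 : Finset (Finset ℕ)}

lemma prodMeasure_image_subtype (h𝔉 : 𝔉 ⊆ s.powerset) (n : ℕ) (p : ℝ) :
    prodMeasure n p (𝔉.image (Finset.subtype (· ∈ s))) = prodMeasure n p 𝔉 := by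
  have hmem : ∀ F ∈ 𝔉, ∀ x ∈ F, x ∈ s := fun F hF => mem_powerset.1 (h𝔉 hF)
  rw [prodMeasure, sum_image]
  · refine sum_congr rfl fun F hF => ?_
    rw [card_subtype, filter_true_of_mem (hmem F hF)]
  · intro F hF F' hF' hFF'
    rw [← subtype_map_of_mem (hmem F hF), ← subtype_map_of_mem (hmem F' hF')]
    exact congrArg _ hFF'

lemma intersecting_image_subtype (h𝔉 : 𝔉 ⊆ s.powerset) (hint : Intersecting' 𝔉) :
    ((𝔉.image (Finset.subtype (· ∈ s)) : Finset (Finset s)) : Set (Finset s)).Intersecting := by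
  simp only [coe_image]
  rintro _ ⟨F, hF, rfl⟩ _ ⟨F', hF', rfl⟩
  obtain ⟨x, hx⟩ := hint F hF F' hF'
  rw [mem_inter] at hx
  have hxs : x ∈ s := mem_powerset.1 (h𝔉 hF) hx.1
  exact not_disjoint_iff.2 ⟨⟨x, hxs⟩, by simpa using hx.1, by simpa using hx.2⟩

end Subtype

theorem intersecting_product_measure_le_general
    (n : ℕ) (p : ℝ) (hp0 : 0 ≤ p) (hp : p ≤ 1 / 2)
    (𝔉 : Finset (Finset ℕ)) (hsub : 𝔉 ⊆ (Finset.Icc 1 n).powerset)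
    (hint : Intersecting' 𝔉) :
    ∑ F ∈ 𝔉, p ^ F.card * (1 - p) ^ (n - F.card) ≤ p := by
  have := prodMeasure_le_of_intersecting hp0 hp (intersecting_image_subtype hsub hint)
  rwa [Fintype.card_coe, Nat.card_Icc, Nat.add_sub_cancel, prodMeasure_image_subtype hsub] at this

/-- Product-measure Erdős–Ko–Rado: an intersecting family has `ρ_p`-measure at most `p`. -/
theorem intersecting_product_measure_le
    (n : ℕ) (hn : 1 ≤ n) (p : ℝ) (hp0 : 0 ≤ p) (hp : p ≤ 1 / 2)
    (𝔉 : Finset (Finset ℕ)) (hsub : 𝔉 ⊆ (Finset.Icc 1 n).powerset)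
    (hint : Intersecting' 𝔉) :
    ∑ F ∈ 𝔉, p ^ F.card * (1 - p) ^ (n - F.card) ≤ p :=
  intersecting_product_measure_le_general n p hp0 hp 𝔉 hsub hint
end

section
/- Let 𝔉 ⊆ 𝒫([n]) be a shifted intersecting family and let a_* ∈ [n] be its maximal necessary intersection point. If F, F' ∈ 𝔉 satisfy F ∩ F' ∩ [a_*] = {a_*}, then [a_*] ⊆ F ∪ F'. -/
open Finset

/- If some `b ≤ a_*` lay outside `F ∪ F'`, shifting `a_*` to `b` in `F` would give a member
of the family meeting `F'` only above `a_*`; the least common element of the two would then be a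
necessary intersection point beyond `a_*`. -/

lemma shift_of_mem_of_notMem {i j : ℕ} {F : Finset ℕ} (hj : j ∈ F) (hi : i ∉ F) :
    shift i j F = insert i (F.erase j) := by
  rw [shift, if_pos ⟨hj, hi⟩]

lemma isNIP1_min'_inter {𝔉 : Finset (Finset ℕ)} {F F' : Finset ℕ} (hF : F ∈ 𝔉) (hF' : F' ∈ 𝔉)
    (h : (F ∩ F').Nonempty) (h0 : 0 ∉ F) : IsNIP1 𝔉 ((F ∩ F').min' h) := by
  set m := (F ∩ F').min' h
  have hm : m ∈ F ∩ F' := min'_mem _ h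
  have hm1 : 1 ≤ m := Nat.one_le_iff_ne_zero.2 fun h => h0 (h ▸ (mem_inter.1 hm).1)
  have hsingle : Icc 1 m ∩ F ∩ F' = {m} := by
    ext x
    simp only [mem_inter, mem_Icc, mem_singleton]
    constructor
    · rintro ⟨⟨⟨-, hxm⟩, hxF⟩, hxF'⟩
      exact le_antisymm hxm (min'_le _ x (mem_inter.2 ⟨hxF, hxF'⟩))
    · rintro rfl
      exact ⟨⟨⟨hm1, le_rfl⟩, (mem_inter.1 hm).1⟩, (mem_inter.1 hm).2⟩
  exact ⟨F, hF, F', hF', by rw [hsingle, card_singleton], hm⟩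

lemma lt_of_mem_insert_erase_inter {F F' : Finset ℕ} {a b x : ℕ}
    (hcap : F ∩ F' ∩ Icc 1 a = {a}) (hbF' : b ∉ F') (h0 : 0 ∉ F)
    (hx : x ∈ insert b (F.erase a) ∩ F') : a < x := by
  obtain ⟨hxG, hxF'⟩ := mem_inter.1 hx
  have hxb : x ≠ b := by rintro rfl; exact hbF' hxF'
  obtain ⟨hxa, hxF⟩ := mem_erase.1 ((mem_insert.1 hxG).resolve_left hxb)
  by_contra! hle
  have hx1 : 1 ≤ x := Nat.one_le_iff_ne_zero.2 fun h => h0 (h ▸ hxF)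
  have hmem : x ∈ F ∩ F' ∩ Icc 1 a := by simp [hxF, hxF', hx1, hle]
  rw [hcap, mem_singleton] at hmem
  exact hxa hmem

theorem cover_of_inter_eq_singleton_general
    (n : ℕ) (𝔉 : Finset (Finset ℕ)) (hsub : 𝔉 ⊆ (Finset.Icc 1 n).powerset)
    (hint : Intersecting' 𝔉) (hshift : IsShifted n 𝔉)
    (astar : ℕ) (han : astar ≤ n)
    (hmax : ∀ b, IsNIP1 𝔉 b → b ≤ astar)
    (F F' : Finset ℕ) (hF : F ∈ 𝔉) (hF' : F' ∈ 𝔉)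
    (hcap : F ∩ F' ∩ Finset.Icc 1 astar = {astar}) :
    Finset.Icc 1 astar ⊆ F ∪ F' := by
  intro b hb
  by_contra hbFF'
  obtain ⟨hbF, hbF'⟩ := not_or.1 (mem_union.not.1 hbFF')
  have haF : astar ∈ F := by
    have : astar ∈ F ∩ F' ∩ Icc 1 astar := hcap ▸ mem_singleton_self astar
    exact (mem_inter.1 (mem_inter.1 this).1).1
  have hba : b < astar := lt_of_le_of_ne (mem_Icc.1 hb).2 (by rintro rfl; exact hbF haF)
  have hG : insert b (F.erase astar) ∈ 𝔉 := by
    rw [← shift_of_mem_of_notMem haF hbF]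
    exact hshift b astar (mem_Icc.1 hb).1 hba han F hF
  have h0 : ∀ G ∈ 𝔉, 0 ∉ G := fun G hG h => by simpa using mem_powerset.1 (hsub hG) h
  have hne := hint _ hG F' hF'
  have hm := hmax _ (isNIP1_min'_inter hG hF' hne (h0 _ hG))
  exact hm.not_gt (lt_of_mem_insert_erase_inter hcap hbF' (h0 F hF) (min'_mem _ hne))

/-- If `𝔉` is shifted and intersecting with maximal necessary intersection point `a_*`,
and `F ∩ F' ∩ [a_*] = {a_*}`, then `[a_*] ⊆ F ∪ F'`. -/
theorem cover_of_inter_eq_singleton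
    (n : ℕ) (𝔉 : Finset (Finset ℕ)) (hsub : 𝔉 ⊆ (Finset.Icc 1 n).powerset)
    (hint : Intersecting' 𝔉) (hshift : IsShifted n 𝔉)
    (astar : ℕ) (ha1 : 1 ≤ astar) (han : astar ≤ n)
    (hNIP : IsNIP1 𝔉 astar) (hmax : ∀ b, IsNIP1 𝔉 b → b ≤ astar)
    (F F' : Finset ℕ) (hF : F ∈ 𝔉) (hF' : F' ∈ 𝔉)
    (hcap : F ∩ F' ∩ Finset.Icc 1 astar = {astar}) :
    Finset.Icc 1 astar ⊆ F ∪ F' :=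
  cover_of_inter_eq_singleton_general n 𝔉 hsub hint hshift astar han hmax F F' hF hF' hcap
end

section
/- Let 𝔉 ⊆ 𝒫([n]) be an intersecting family with maximal necessary intersection point a_*. If F ∈ 𝔉 and there exists F' ∈ 𝔉 with F ∩ F' ∩ [a_*] = {a_*}, then F \ {a_*} ∉ 𝔉. -/
open Finset

lemma Icc_one_min'_inter_eq_singleton {s : Finset ℕ} (hs : s.Nonempty) (hpos : ∀ x ∈ s, 1 ≤ x) :
    Icc 1 (s.min' hs) ∩ s = {s.min' hs} := by
  ext x
  simp only [mem_inter, mem_Icc, mem_singleton]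
  constructor
  · rintro ⟨⟨-, hx⟩, hxs⟩
    exact le_antisymm hx (s.min'_le x hxs)
  · rintro rfl
    exact ⟨⟨hpos _ (s.min'_mem hs), le_rfl⟩, s.min'_mem hs⟩

lemma isNIP1_min' {𝔉 : Finset (Finset ℕ)} {E F : Finset ℕ} (hE : E ∈ 𝔉) (hF : F ∈ 𝔉)
    (hne : (E ∩ F).Nonempty) (hpos : ∀ x ∈ E ∩ F, 1 ≤ x) :
    IsNIP1 𝔉 ((E ∩ F).min' hne) := by
  refine ⟨E, hE, F, hF, ?_, (E ∩ F).min'_mem hne⟩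
  rw [inter_assoc, Icc_one_min'_inter_eq_singleton hne hpos, card_singleton]

lemma lt_of_inter_Icc_eq_singleton {s : Finset ℕ} {a x : ℕ} (h : s ∩ Icc 1 a = {a})
    (hx : x ∈ s) (hx1 : 1 ≤ x) (hxa : x ≠ a) : a < x := by
  by_contra! hle
  have : x ∈ s ∩ Icc 1 a := mem_inter.mpr ⟨hx, mem_Icc.mpr ⟨hx1, hle⟩⟩
  exact hxa (mem_singleton.mp (h ▸ this))

theorem erase_not_mem_of_depends_general
    (n : ℕ) (𝔉 : Finset (Finset ℕ)) (hsub : 𝔉 ⊆ (Finset.Icc 1 n).powerset)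
    (hint : Intersecting' 𝔉)
    (astar : ℕ) (hmax : ∀ b, IsNIP1 𝔉 b → b ≤ astar)
    (F : Finset ℕ)
    (hdep : ∃ F' ∈ 𝔉, F ∩ F' ∩ Finset.Icc 1 astar = {astar}) :
    F.erase astar ∉ 𝔉 := by
  intro hE
  obtain ⟨F', hF', hFF'⟩ := hdep
  have hpos : ∀ x ∈ F.erase astar ∩ F', 1 ≤ x := fun x hx =>
    (mem_Icc.mp (mem_powerset.mp (hsub hF') (mem_inter.mp hx).2)).1
  have hne := hint _ hE _ hF'
  set b := (F.erase astar ∩ F').min' hne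
  have hb := mem_inter.mp ((F.erase astar ∩ F').min'_mem hne)
  -- `b` is a necessary intersection point, yet it lies beyond `a_*`.
  have hlt : astar < b :=
    lt_of_inter_Icc_eq_singleton hFF' (mem_inter.mpr ⟨mem_of_mem_erase hb.1, hb.2⟩)
      (hpos b ((F.erase astar ∩ F').min'_mem hne)) (ne_of_mem_erase hb.1)
  exact (hmax b (isNIP1_min' hE hF' hne hpos)).not_gt hlt

/-- For `F` in `𝔉(a_*)`, the set `F \ {a_*}` is not in `𝔉`. -/
theorem erase_not_mem_of_depends
    (n : ℕ) (𝔉 : Finset (Finset ℕ)) (hsub : 𝔉 ⊆ (Finset.Icc 1 n).powerset)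
    (hint : Intersecting' 𝔉)
    (astar : ℕ) (hNIP : IsNIP1 𝔉 astar) (hmax : ∀ b, IsNIP1 𝔉 b → b ≤ astar)
    (F : Finset ℕ) (hF : F ∈ 𝔉)
    (hdep : ∃ F' ∈ 𝔉, F ∩ F' ∩ Finset.Icc 1 astar = {astar}) :
    F.erase astar ∉ 𝔉 :=
  erase_not_mem_of_depends_general n 𝔉 hsub hint astar hmax F hdep
end

section
/- Let r ≥ 2 and n, t ≥ 1 be integers, let 𝔉_1,…,𝔉_r ⊆ 𝒫([n]) be r-cross t-intersecting families with maximal necessary intersection point a_*, and suppose 𝔉_r \ 𝔉_r(a_*) ≠ ∅. Let k_1,…,k_{r−1} ∈ [n] and suppose that for each i ∈ [r−1] and each F ∈ 𝔉_i(a_*) with |F| ≤ k_i an element s(F) ∈ [n] \ [a_*] with s(F) ∉ F is given. Define, for i ∈ [r−1], 𝔉'_i = 𝔉_i ∪ {F \ {a_*} : F ∈ 𝔉_i(a_*), |F| > k_i} ∪ {σ_{s(F) a_*}(F) : F ∈ 𝔉_i(a_*), |F| ≤ k_i}, and 𝔉'_r = 𝔉_r \ 𝔉_r(a_*). Then 𝔉'_1,…,𝔉'_r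 are r-cross t-intersecting and every necessary intersection point of 𝔉'_1,…,𝔉'_r is smaller than a_*. -/
open Finset

/-- `F ∈ 𝔉 j` depends on `a`, i.e. `F ∈ 𝔉_j(a)`. -/
def FamDependsOn {r : ℕ} (t : ℕ) (𝔉 : Fin r → Finset (Finset ℕ)) (a : ℕ) (j : Fin r)
    (F : Finset ℕ) : Prop :=
  F ∈ 𝔉 j ∧ ∃ G : Fin r → Finset ℕ, (∀ i, i ≠ j → G i ∈ 𝔉 i) ∧
    (Finset.Icc 1 a ∩ F ∩ interOn (Finset.univ.erase j) G).card = t ∧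
    a ∈ F ∩ interOn (Finset.univ.erase j) G

/-!
For families in `𝔉` a tuple whose last member is not in `𝔉_r(a_*)` already has `t` common
points below `a_*`: the `t`-th common point is a necessary intersection point, hence `≤ a_*`, and
if exactly `t` of them were `≤ a_*` with `a_*` among them, the last member would lie in
`𝔉_r(a_*)`. Every member of `𝔉'_i` contains `F \ {a_*}` for some `F ∈ 𝔉_i`, so tuples of `𝔉'`
inherit these `t` points, which gives cross-intersection. A necessary intersection point
`b ≥ a_*` of `𝔉'` would either see `a_*` in the intersection, forcing all members to come from `𝔉`
and the last one into `𝔉_r(a_*)`, or it would see `t + 1` common points up to `b`.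
-/

section Intersections

variable {r : ℕ}

theorem mem_interOn {s : Finset (Fin r)} (hs : s.Nonempty) {G : Fin r → Finset ℕ} {x : ℕ} :
    x ∈ interOn s G ↔ ∀ i ∈ s, x ∈ G i := by
  obtain ⟨i₀, hi₀⟩ := hs
  rw [interOn, mem_filter, mem_sup]
  exact ⟨And.right, fun h => ⟨⟨i₀, hi₀, h i₀ hi₀⟩, h⟩⟩

theorem mem_interAll (hr : 0 < r) {G : Fin r → Finset ℕ} {x : ℕ} :
    x ∈ interAll G ↔ ∀ i, x ∈ G i := by
  simp [interAll, mem_interOn (univ_nonempty_iff.2 ⟨⟨0, hr⟩⟩)]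

theorem inter_interOn_erase (hr : 2 ≤ r) (G : Fin r → Finset ℕ) (j : Fin r) :
    G j ∩ interOn (univ.erase j) G = interAll G := by
  ext x
  rw [mem_inter, mem_interOn (erase_univ_nonempty hr j), mem_interAll (by omega)]
  refine ⟨fun ⟨hj, h⟩ i => ?_, fun h => ⟨h j, fun i _ => h i⟩⟩
  by_cases hij : i = j
  · exact hij ▸ hj
  · exact h i (mem_erase.2 ⟨hij, mem_univ i⟩)

end Intersections

theorem exists_mem_card_Icc_inter_eq {t : ℕ} (ht : 0 < t) {S : Finset ℕ} (h0 : 0 ∉ S)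
    (htS : t ≤ #S) : ∃ c ∈ S, #(Icc 1 c ∩ S) = t := by
  induction S using Finset.induction_on_max with
  | empty => simp at htS; omega
  | insert m S hlt ih =>
    rw [mem_insert, not_or] at h0
    have hm : m ∉ S := fun hm => lt_irrefl m (hlt m hm)
    rw [card_insert_of_notMem hm] at htS
    rcases htS.lt_or_eq with htS | rfl
    · obtain ⟨c, hc, hcard⟩ := ih h0.2 (by omega)
      refine ⟨c, mem_insert_of_mem hc, ?_⟩
      rwa [inter_insert_of_notMem fun hmc => (mem_Icc.1 hmc).2.not_gt (hlt c hc)]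
    · refine ⟨m, mem_insert_self m S, ?_⟩
      rw [inter_eq_right.2, card_insert_of_notMem hm]
      intro x hx
      rcases mem_insert.1 hx with rfl | hx
      · exact mem_Icc.2 ⟨Nat.one_le_iff_ne_zero.2 (Ne.symm h0.1), le_rfl⟩
      · exact mem_Icc.2 ⟨Nat.one_le_iff_ne_zero.2 (ne_of_mem_of_not_mem hx h0.2), (hlt x hx).le⟩

section NecessaryPoints

variable {r t a : ℕ} {𝔉 : Fin r → Finset (Finset ℕ)}

theorem famDependsOn_of_isNIP_witness (hr : 2 ≤ r) {G : Fin r → Finset ℕ}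
    (hG : ∀ i, G i ∈ 𝔉 i) (hcard : #(Icc 1 a ∩ interAll G) = t) (ha : a ∈ interAll G)
    (j : Fin r) : FamDependsOn t 𝔉 a j (G j) :=
  ⟨hG j, G, fun i _ => hG i, by rwa [inter_assoc, inter_interOn_erase hr],
    by rwa [inter_interOn_erase hr]⟩

theorem le_card_Icc_inter_interAll (ht : 0 < t) (hcross : CrossIntersecting t 𝔉)
    (hmax : ∀ b, IsNIP t 𝔉 b → b ≤ a) {G : Fin r → Finset ℕ} (hG : ∀ i, G i ∈ 𝔉 i)
    (h0 : 0 ∉ interAll G) : t ≤ #(Icc 1 a ∩ interAll G) := by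
  obtain ⟨c, hc, hcard⟩ := exists_mem_card_Icc_inter_eq ht h0 (hcross G hG)
  have hca : c ≤ a := hmax c ⟨G, hG, hcard, hc⟩
  exact hcard ▸ card_le_card (inter_subset_inter_right (Icc_subset_Icc_right hca))

theorem le_card_Ico_inter_interAll (hr : 2 ≤ r) (ht : 0 < t) (hcross : CrossIntersecting t 𝔉)
    (hmax : ∀ b, IsNIP t 𝔉 b → b ≤ a) {G : Fin r → Finset ℕ} (hG : ∀ i, G i ∈ 𝔉 i)
    (h0 : 0 ∉ interAll G) {j : Fin r} (hj : ¬ FamDependsOn t 𝔉 a j (G j)) :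
    t ≤ #(Ico 1 a ∩ interAll G) := by
  have hle := le_card_Icc_inter_interAll ht hcross hmax hG h0
  rw [← Icc_erase_right, erase_inter]
  by_cases ha : a ∈ interAll G
  · have hne : #(Icc 1 a ∩ interAll G) ≠ t :=
      fun hcard => hj (famDependsOn_of_isNIP_witness hr hG hcard ha j)
    have := pred_card_le_card_erase (s := Icc 1 a ∩ interAll G) (a := a)
    omega
  · rwa [erase_eq_of_notMem fun h => ha (mem_inter.1 h).2]

end NecessaryPoints

section Lift

variable {r t a : ℕ} {𝔉 𝔉' : Fin r → Finset (Finset ℕ)} {j : Fin r}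

theorem le_card_Ico_inter_interAll_of_lift (hr : 2 ≤ r) (ht : 0 < t)
    (hcross : CrossIntersecting t 𝔉) (hmax : ∀ b, IsNIP t 𝔉 b → b ≤ a)
    (h0 : ∀ i, ∀ F ∈ 𝔉 i, 0 ∉ F)
    (hlift : ∀ i ≠ j, ∀ X ∈ 𝔉' i, ∃ F ∈ 𝔉 i, F.erase a ⊆ X)
    (hj : ∀ X ∈ 𝔉' j, X ∈ 𝔉 j ∧ ¬ FamDependsOn t 𝔉 a j X)
    {G' : Fin r → Finset ℕ} (hG' : ∀ i, G' i ∈ 𝔉' i) : t ≤ #(Ico 1 a ∩ interAll G') := by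
  have hr0 : 0 < r := by omega
  have hchoice : ∀ i, ∃ F ∈ 𝔉 i, F.erase a ⊆ G' i ∧ (i = j → F = G' i) := by
    intro i
    by_cases hij : i = j
    · subst hij
      exact ⟨G' i, (hj _ (hG' i)).1, erase_subset _ _, fun _ => rfl⟩
    · obtain ⟨F, hF, hFX⟩ := hlift i hij (G' i) (hG' i)
      exact ⟨F, hF, hFX, fun h => absurd h hij⟩
  choose F hF hFG' hFj using hchoice
  have hF0 : 0 ∉ interAll F := fun h => h0 j (F j) (hF j) ((mem_interAll hr0).1 h j)
  have hndep : ¬ FamDependsOn t 𝔉 a j (F j) := hFj j rfl ▸ (hj _ (hG' j)).2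
  refine (le_card_Ico_inter_interAll hr ht hcross hmax hF hF0 hndep).trans (card_le_card ?_)
  intro x hx
  obtain ⟨hxa, hxF⟩ := mem_inter.1 hx
  refine mem_inter.2 ⟨hxa, (mem_interAll hr0).2 fun i => hFG' i ?_⟩
  exact mem_erase.2 ⟨(mem_Ico.1 hxa).2.ne, (mem_interAll hr0).1 hxF i⟩

theorem crossIntersecting_of_lift (hr : 2 ≤ r) (ht : 0 < t)
    (hcross : CrossIntersecting t 𝔉) (hmax : ∀ b, IsNIP t 𝔉 b → b ≤ a)
    (h0 : ∀ i, ∀ F ∈ 𝔉 i, 0 ∉ F)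
    (hlift : ∀ i ≠ j, ∀ X ∈ 𝔉' i, ∃ F ∈ 𝔉 i, F.erase a ⊆ X)
    (hj : ∀ X ∈ 𝔉' j, X ∈ 𝔉 j ∧ ¬ FamDependsOn t 𝔉 a j X) :
    CrossIntersecting t 𝔉' := fun _ hG' =>
  (le_card_Ico_inter_interAll_of_lift hr ht hcross hmax h0 hlift hj hG').trans
    (card_le_card inter_subset_right)

theorem lt_of_isNIP_of_lift (hr : 2 ≤ r) (ht : 0 < t)
    (hcross : CrossIntersecting t 𝔉) (hmax : ∀ b, IsNIP t 𝔉 b → b ≤ a)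
    (h0 : ∀ i, ∀ F ∈ 𝔉 i, 0 ∉ F)
    (hlift : ∀ i ≠ j, ∀ X ∈ 𝔉' i, ∃ F ∈ 𝔉 i, F.erase a ⊆ X)
    (hj : ∀ X ∈ 𝔉' j, X ∈ 𝔉 j ∧ ¬ FamDependsOn t 𝔉 a j X)
    (hback : ∀ i ≠ j, ∀ X ∈ 𝔉' i, a ∈ X → X ∈ 𝔉 i) {b : ℕ} (hb : IsNIP t 𝔉' b) : b < a := by
  obtain ⟨G', hG', hcard, hbG'⟩ := hb
  by_contra! hab
  by_cases haG' : a ∈ interAll G'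
  · have hG'𝔉 : ∀ i, G' i ∈ 𝔉 i := fun i => by
      by_cases hij : i = j
      · exact hij ▸ (hj _ (hG' j)).1
      · exact hback i hij _ (hG' i) ((mem_interAll (by omega)).1 haG' i)
    obtain rfl : b = a := (hmax b ⟨G', hG'𝔉, hcard, hbG'⟩).antisymm hab
    exact (hj _ (hG' j)).2 (famDependsOn_of_isNIP_witness hr hG'𝔉 hcard haG' j)
  · have hba : a < b := hab.lt_of_ne fun h => haG' (h ▸ hbG')
    have hbnot : b ∉ Ico 1 a ∩ interAll G' := fun h => (mem_Ico.1 (mem_inter.1 h).1).2.not_gt hba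
    have hsub : insert b (Ico 1 a ∩ interAll G') ⊆ Icc 1 b ∩ interAll G' :=
      insert_subset (mem_inter.2 ⟨mem_Icc.2 ⟨by omega, le_rfl⟩, hbG'⟩)
        (inter_subset_inter_right ((Ico_subset_Ico_right hab).trans Ico_subset_Icc_self))
    have hlow := le_card_Ico_inter_interAll_of_lift hr ht hcross hmax h0 hlift hj hG'
    have hup := card_le_card hsub
    rw [card_insert_of_notMem hbnot, hcard] at hup
    omega

end Lift

theorem erase_subset_shift (i j : ℕ) (F : Finset ℕ) : F.erase j ⊆ shift i j F := by
  unfold shift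
  split_ifs
  · exact subset_insert _ _
  · exact erase_subset _ _

theorem notMem_shift {i j : ℕ} {F : Finset ℕ} (hi : i ∉ F) (hij : i ≠ j) :
    j ∉ shift i j F := by
  unfold shift
  split_ifs with h
  · simp [Ne.symm hij]
  · exact fun hj => h ⟨hj, hi⟩

/-- **Claim 4.2**: the updated families `𝔉'_1, …, 𝔉'_r` are `r`-cross `t`-intersecting
and all of their necessary intersection points are smaller than `a_*`. -/
theorem updated_families_crossIntersecting
    (r n t : ℕ) (hr : 2 ≤ r) (ht : 1 ≤ t)
    (𝔉 : Fin r → Finset (Finset ℕ)) (hsub : ∀ i, 𝔉 i ⊆ (Finset.Icc 1 n).powerset)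
    (hcross : CrossIntersecting t 𝔉)
    (astar : ℕ) (hmax : ∀ b, IsNIP t 𝔉 b → b ≤ astar)
    (ilast : Fin r)
    (k : Fin r → ℕ)
    (s : Fin r → Finset ℕ → ℕ)
    (hs : ∀ i, i ≠ ilast → ∀ F, FamDependsOn t 𝔉 astar i F → F.card ≤ k i →
      astar < s i F ∧ s i F ≤ n ∧ s i F ∉ F)
    (𝔉' : Fin r → Finset (Finset ℕ))
    (h𝔉'last : ∀ X, X ∈ 𝔉' ilast ↔ X ∈ 𝔉 ilast ∧ ¬ FamDependsOn t 𝔉 astar ilast X)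
    (h𝔉' : ∀ i, i ≠ ilast → ∀ X, X ∈ 𝔉' i ↔
      (X ∈ 𝔉 i ∨
        (∃ F, FamDependsOn t 𝔉 astar i F ∧ k i < F.card ∧ X = F.erase astar) ∨
        (∃ F, FamDependsOn t 𝔉 astar i F ∧ F.card ≤ k i ∧ X = shift (s i F) astar F))) :
    CrossIntersecting t 𝔉' ∧ ∀ b, IsNIP t 𝔉' b → b < astar := by
  have h0 : ∀ i, ∀ F ∈ 𝔉 i, 0 ∉ F := fun i F hF h => by
    simpa using mem_powerset.1 (hsub i hF) h
  have hj : ∀ X ∈ 𝔉' ilast, X ∈ 𝔉 ilast ∧ ¬ FamDependsOn t 𝔉 astar ilast X :=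
    fun X => (h𝔉'last X).1
  have hlift : ∀ i ≠ ilast, ∀ X ∈ 𝔉' i, ∃ F ∈ 𝔉 i, F.erase astar ⊆ X := by
    intro i hi X hX
    rcases (h𝔉' i hi X).1 hX with hX | ⟨F, hF, -, rfl⟩ | ⟨F, hF, -, rfl⟩
    · exact ⟨X, hX, erase_subset _ _⟩
    · exact ⟨F, hF.1, subset_rfl⟩
    · exact ⟨F, hF.1, erase_subset_shift _ _ _⟩
  have hback : ∀ i ≠ ilast, ∀ X ∈ 𝔉' i, astar ∈ X → X ∈ 𝔉 i := by
    intro i hi X hX ha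
    rcases (h𝔉' i hi X).1 hX with hX | ⟨F, -, -, rfl⟩ | ⟨F, hF, hcard, rfl⟩
    · exact hX
    · exact absurd ha (notMem_erase _ _)
    · obtain ⟨hlt, -, hsF⟩ := hs i hi F hF hcard
      exact absurd ha (notMem_shift hsF hlt.ne')
  exact ⟨crossIntersecting_of_lift hr ht hcross hmax h0 hlift hj,
    fun b => lt_of_isNIP_of_lift hr ht hcross hmax h0 hlift hj hback⟩
end

section
/- Let r ≥ 2 and n, t ≥ 1 be integers and let 𝔉_1,…,𝔉_r ⊆ 𝒫([n]) be shifted non-empty r-cross t-intersecting families with maximal necessary intersection point a_*. If j ∈ [r] is such that every set of 𝔉_j depends on a_*, i.e., 𝔉_j = 𝔉_j(a_*), then [a_*] ⊆ F for every F ∈ 𝔉_j, that is, 𝔉_j ⊆ B_{n,a_*}. -/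
open Finset

/-- `F ∈ 𝔉 j` depends on `a`, i.e. `F ∈ 𝔉_j(a)`. -/
def DependsOnAt {r : ℕ} (t : ℕ) (𝔉 : Fin r → Finset (Finset ℕ)) (a : ℕ) (j : Fin r)
    (F : Finset ℕ) : Prop :=
  F ∈ 𝔉 j ∧ ∃ G : Fin r → Finset ℕ, (∀ i, i ≠ j → G i ∈ 𝔉 i) ∧
    (Finset.Icc 1 a ∩ F ∩ interOn (Finset.univ.erase j) G).card = t ∧
    a ∈ F ∩ interOn (Finset.univ.erase j) G

theorem notMem_shift_of_notMem {i j : ℕ} {F : Finset ℕ} (hij : i ≠ j) (hi : i ∉ F) :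
    j ∉ shift i j F := by
  unfold shift
  split_ifs with h
  · simp [hij.symm]
  · exact fun hj => h ⟨hj, hi⟩

theorem Icc_subset_of_isShifted_of_forall_mem {n a : ℕ} {𝔉 : Finset (Finset ℕ)}
    (hshift : IsShifted n 𝔉) (hsub : 𝔉 ⊆ (Finset.Icc 1 n).powerset) (hmem : ∀ F ∈ 𝔉, a ∈ F) :
    ∀ F ∈ 𝔉, Finset.Icc 1 a ⊆ F := by
  intro F hF b hb
  by_contra hbF
  obtain ⟨hb₁, hba⟩ := Finset.mem_Icc.mp hb
  have hba' : b ≠ a := fun h => hbF (h ▸ hmem F hF)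
  have han : a ≤ n := (Finset.mem_Icc.mp (Finset.mem_powerset.mp (hsub hF) (hmem F hF))).2
  have hshifted : shift b a F ∈ 𝔉 := hshift b a hb₁ (lt_of_le_of_ne hba hba') han F hF
  exact notMem_shift_of_notMem hba' hbF (hmem _ hshifted)

theorem DependsOnAt.mem {r t a : ℕ} {𝔉 : Fin r → Finset (Finset ℕ)} {j : Fin r}
    {F : Finset ℕ} (h : DependsOnAt t 𝔉 a j F) : a ∈ F := by
  obtain ⟨-, _, -, -, ha⟩ := h
  exact (Finset.mem_inter.mp ha).1

theorem subset_famB_of_all_depend_general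
    (r n t : ℕ)
    (𝔉 : Fin r → Finset (Finset ℕ)) (hsub : ∀ i, 𝔉 i ⊆ (Finset.Icc 1 n).powerset)
    (hshift : ∀ i, IsShifted n (𝔉 i))
    (astar : ℕ)
    (j : Fin r) (hdep : ∀ F ∈ 𝔉 j, DependsOnAt t 𝔉 astar j F) :
    ∀ F ∈ 𝔉 j, Finset.Icc 1 astar ⊆ F :=
  Icc_subset_of_isShifted_of_forall_mem (hshift j) (hsub j) fun F hF => (hdep F hF).mem

/-- If every set of `𝔉_j` depends on `a_*`, then `𝔉_j ⊆ B_{n,a_*}`. -/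
theorem subset_famB_of_all_depend
    (r n t : ℕ) (hr : 2 ≤ r) (hn : 1 ≤ n) (ht : 1 ≤ t)
    (𝔉 : Fin r → Finset (Finset ℕ)) (hsub : ∀ i, 𝔉 i ⊆ (Finset.Icc 1 n).powerset)
    (hne : ∀ i, (𝔉 i).Nonempty) (hshift : ∀ i, IsShifted n (𝔉 i))
    (hcross : CrossIntersecting t 𝔉)
    (astar : ℕ) (hNIP : IsNIP t 𝔉 astar) (hmax : ∀ b, IsNIP t 𝔉 b → b ≤ astar)
    (j : Fin r) (hdep : ∀ F ∈ 𝔉 j, DependsOnAt t 𝔉 astar j F) :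
    ∀ F ∈ 𝔉 j, Finset.Icc 1 astar ⊆ F :=
  subset_famB_of_all_depend_general r n t 𝔉 hsub hshift astar j hdep
end

section
/- Let n, t ≥ 1 be integers, let 𝔉_1, 𝔉_2 ⊆ 𝒫([n]) be non-empty 2-cross t-intersecting families, and let a_* ∈ [n] be such that no b > a_* is a necessary intersection point of 𝔉_1, 𝔉_2. If [a_*] ⊆ F' for every F' ∈ 𝔉_2, then |F ∩ [a_*]| ≥ t for every F ∈ 𝔉_1; that is, 𝔉_1 ⊆ A_{n,a_*,t} and 𝔉_2 ⊆ B_{n,a_*}. -/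
open Finset

/-! The `t`-th smallest element `b` of `F₁ ∩ F₂` satisfies `|[b] ∩ F₁ ∩ F₂| = t` and `b ∈ F₁ ∩ F₂`,
so it is a necessary intersection point. Maximality of `a_*` forces `b ≤ a_*`, whence already
`F₁ ∩ [a_*]` contains the `t` smallest elements of `F₁ ∩ F₂`. -/

theorem Finset.exists_mem_card_filter_le_eq {α : Type*} [LinearOrder α] (S : Finset α) {t : ℕ}
    (ht : 1 ≤ t) (htS : t ≤ #S) : ∃ b ∈ S, #{x ∈ S | x ≤ b} = t := by
  classical
  induction S using Finset.induction_on_max with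
  | empty => simp at htS; omega
  | insert m s hlt ih =>
    have hm : m ∉ s := fun h => (hlt m h).false
    rw [card_insert_of_notMem hm] at htS
    rcases htS.lt_or_eq with hts | rfl
    · obtain ⟨b, hb, hcard⟩ := ih (by omega)
      refine ⟨b, mem_insert_of_mem hb, ?_⟩
      rwa [filter_insert, if_neg (hlt b hb).not_ge]
    · refine ⟨m, mem_insert_self m s, ?_⟩
      rw [filter_true_of_mem fun x hx => ?_, card_insert_of_notMem hm]
      rcases mem_insert.mp hx with rfl | hx
      exacts [le_rfl, (hlt x hx).le]

theorem Finset.exists_mem_lt_card_filter_le_eq {α : Type*} [LinearOrder α] {S : Finset α}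
    {t : ℕ} {a : α} (hlt : #{x ∈ S | x ≤ a} < t) (htS : t ≤ #S) :
    ∃ b ∈ S, a < b ∧ #{x ∈ S | x ≤ b} = t := by
  obtain ⟨b, hb, hcard⟩ := S.exists_mem_card_filter_le_eq (by omega) htS
  refine ⟨b, hb, lt_of_not_ge fun hba => hlt.not_ge ?_, hcard⟩
  exact hcard ▸ card_le_card (monotone_filter_right S fun _ _ hx => hx.trans hba)

theorem Finset.Icc_one_inter_eq_filter_le {S : Finset ℕ} (hS : 0 ∉ S) (b : ℕ) :
    Icc 1 b ∩ S = {x ∈ S | x ≤ b} := by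
  ext x
  simp only [mem_inter, mem_Icc, mem_filter]
  have : x ∈ S → 1 ≤ x := fun hx => Nat.one_le_iff_ne_zero.mpr fun h => hS (h ▸ hx)
  tauto

theorem mem_famA_of_other_in_famB_general
    (n t : ℕ)
    (𝔉₁ 𝔉₂ : Finset (Finset ℕ))
    (hsub₁ : 𝔉₁ ⊆ (Finset.Icc 1 n).powerset)
    (hne₂ : 𝔉₂.Nonempty)
    (hcross : ∀ F₁ ∈ 𝔉₁, ∀ F₂ ∈ 𝔉₂, t ≤ (F₁ ∩ F₂).card)
    (astar : ℕ)
    (hmax : ∀ b, astar < b →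
      ¬ ∃ F₁ ∈ 𝔉₁, ∃ F₂ ∈ 𝔉₂, (Finset.Icc 1 b ∩ F₁ ∩ F₂).card = t ∧ b ∈ F₁ ∩ F₂) :
    ∀ F ∈ 𝔉₁, t ≤ (F ∩ Finset.Icc 1 astar).card := by
  intro F hF
  obtain ⟨F₂, hF₂⟩ := hne₂
  by_contra! hlt
  have hS : 0 ∉ F ∩ F₂ := fun h0 => by
    simpa using mem_powerset.mp (hsub₁ hF) (mem_inter.mp h0).1
  have hfew : #{x ∈ F ∩ F₂ | x ≤ astar} < t := by
    rw [← Icc_one_inter_eq_filter_le hS]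
    refine lt_of_le_of_lt (card_le_card fun x hx => ?_) hlt
    simp only [mem_inter] at hx ⊢
    tauto
  obtain ⟨b, hb, hab, hcard⟩ := exists_mem_lt_card_filter_le_eq hfew (hcross F hF F₂ hF₂)
  refine hmax b hab ⟨F, hF, F₂, hF₂, ?_, hb⟩
  rw [inter_assoc, Icc_one_inter_eq_filter_le hS, hcard]

/-- Base case `r = 2`: if `[a_*] ⊆ F'` for every `F' ∈ 𝔉₂`, then every `F ∈ 𝔉₁`
has at least `t` elements in `[a_*]`. -/
theorem mem_famA_of_other_in_famB
    (n t : ℕ) (hn : 1 ≤ n) (ht : 1 ≤ t)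
    (𝔉₁ 𝔉₂ : Finset (Finset ℕ))
    (hsub₁ : 𝔉₁ ⊆ (Finset.Icc 1 n).powerset) (hsub₂ : 𝔉₂ ⊆ (Finset.Icc 1 n).powerset)
    (hne₁ : 𝔉₁.Nonempty) (hne₂ : 𝔉₂.Nonempty)
    (hcross : ∀ F₁ ∈ 𝔉₁, ∀ F₂ ∈ 𝔉₂, t ≤ (F₁ ∩ F₂).card)
    (astar : ℕ) (ha1 : 1 ≤ astar) (han : astar ≤ n)
    (hmax : ∀ b, astar < b →
      ¬ ∃ F₁ ∈ 𝔉₁, ∃ F₂ ∈ 𝔉₂, (Finset.Icc 1 b ∩ F₁ ∩ F₂).card = t ∧ b ∈ F₁ ∩ F₂)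
    (hB : ∀ F' ∈ 𝔉₂, Finset.Icc 1 astar ⊆ F') :
    ∀ F ∈ 𝔉₁, t ≤ (F ∩ Finset.Icc 1 astar).card :=
  mem_famA_of_other_in_famB_general n t 𝔉₁ 𝔉₂ hsub₁ hne₂ hcross astar hmax
end
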